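/- arXiv:1709.06487 — 6 statements merged into one kernel-verified Lean document; each statement's English description precedes it below -/
import Mathlib

section
/- For every γ > 0, every u ∈ E, and every ū ∈ T_γ(u), one has φ(ū) ≤ φ_γ(u) − ((1 − γL)/(2γ))‖u − ū‖² (Proposition 1(ii)). -/
open scoped RealInnerProductSpace
open Filter Topology Asymptotics

/-!
Along the segment from `x` to `y`, the gradient moves by at most `L t ‖y - x‖`, so `ℓ` minus its
quadratic upper model `ℓ(x) + t⟨∇ℓ(x), y - x⟩ + (L t²/2)‖y - x‖²` has nonpositive slope; this is the
descent lemma. Completing the square turns it into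
`ℓ(w) ≤ ℓ(u) - (γ/2)‖∇ℓ(u)‖² + (1/(2γ))‖w - (u - γ∇ℓ(u))‖² - ((1 - γL)/(2γ))‖u - w‖²`,
and adding `g(ū)` at a proximal point `ū`, where the infimum defining the Moreau envelope is
attained, gives the claim. The extended values `g(ū) = ±∞` are harmless since `g(ū)` is added to
both sides.
-/

/-- Moreau envelope `g^γ(v) = inf_w { g(w) + (1/(2γ))‖w − v‖² }` of an
extended-real-valued function `g`. -/
noncomputable def moreauEnv {E : Type*} [NormedAddCommGroup E] [InnerProductSpace ℝ E]
    (g : E → EReal) (γ : ℝ) (v : E) : EReal :=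
  ⨅ w : E, g w + (((1 / (2 * γ)) * ‖w - v‖ ^ 2 : ℝ) : EReal)

/-- The (set-valued) proximal mapping
`prox_{γg}(v) = argmin_w { g(w) + (1/(2γ))‖w − v‖² }`. -/
def proxSet {E : Type*} [NormedAddCommGroup E] [InnerProductSpace ℝ E]
    (g : E → EReal) (γ : ℝ) (v : E) : Set E :=
  {w | ∀ w' : E, g w + (((1 / (2 * γ)) * ‖w - v‖ ^ 2 : ℝ) : EReal)
      ≤ g w' + (((1 / (2 * γ)) * ‖w' - v‖ ^ 2 : ℝ) : EReal)}

/-- The forward–backward envelope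
`φ_γ(u) = ℓ(u) − (γ/2)‖∇ℓ(u)‖² + g^γ(u − γ∇ℓ(u))`, where `l'` plays the role
of the gradient `∇ℓ`. -/
noncomputable def fbe {E : Type*} [NormedAddCommGroup E] [InnerProductSpace ℝ E]
    (l : E → ℝ) (l' : E → E) (g : E → EReal) (γ : ℝ) (u : E) : EReal :=
  ((l u - (γ / 2) * ‖l' u‖ ^ 2 : ℝ) : EReal) + moreauEnv g γ (u - γ • l' u)

section DescentLemma

variable {E : Type*} [NormedAddCommGroup E] [InnerProductSpace ℝ E] [CompleteSpace E]
  {l : E → ℝ} {l' : E → E} {L : ℝ}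

theorem le_add_inner_add_sq_of_hasGradientAt_of_lipschitz
    (hgrad : ∀ x, HasGradientAt l (l' x) x) (hlip : ∀ x y, ‖l' x - l' y‖ ≤ L * ‖x - y‖)
    (x y : E) : l y ≤ l x + ⟪l' x, y - x⟫ + L / 2 * ‖y - x‖ ^ 2 := by
  set d := y - x
  set φ : ℝ → ℝ := fun t ↦ l (x + t • d) - t * ⟪l' x, d⟫ - L / 2 * t ^ 2 * ‖d‖ ^ 2
  have hφ' : ∀ t : ℝ, HasDerivAt φ (⟪l' (x + t • d), d⟫ - ⟪l' x, d⟫ - L * t * ‖d‖ ^ 2) t := by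
    intro t
    have hline : HasDerivAt (fun t : ℝ ↦ x + t • d) d t := by
      simpa using ((hasDerivAt_id t).smul_const d).const_add x
    have hl : HasDerivAt (fun t : ℝ ↦ l (x + t • d)) ⟪l' (x + t • d), d⟫ t := by
      have h := (hgrad (x + t • d)).hasFDerivAt.comp_hasDerivAt t hline
      simp only [InnerProductSpace.toDual_apply_apply] at h
      exact h
    have hlin : HasDerivAt (fun t : ℝ ↦ t * ⟪l' x, d⟫) ⟪l' x, d⟫ t := by
      simpa using (hasDerivAt_id t).mul_const ⟪l' x, d⟫
    have hquad : HasDerivAt (fun t : ℝ ↦ L / 2 * t ^ 2 * ‖d‖ ^ 2) (L * t * ‖d‖ ^ 2) t := by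
      refine (((hasDerivAt_pow 2 t).const_mul (L / 2)).mul_const (‖d‖ ^ 2)).congr_deriv ?_
      push_cast
      ring
    exact (hl.sub hlin).sub hquad
  have hslope : ∀ t ∈ interior (Set.Icc (0 : ℝ) 1),
      ⟪l' (x + t • d), d⟫ - ⟪l' x, d⟫ - L * t * ‖d‖ ^ 2 ≤ 0 := by
    intro t ht
    rw [interior_Icc] at ht
    have hstep : ‖l' (x + t • d) - l' x‖ ≤ L * t * ‖d‖ := by
      simpa [norm_smul, abs_of_pos ht.1, mul_assoc] using hlip (x + t • d) x
    calc ⟪l' (x + t • d), d⟫ - ⟪l' x, d⟫ - L * t * ‖d‖ ^ 2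
        = ⟪l' (x + t • d) - l' x, d⟫ - L * t * ‖d‖ ^ 2 := by rw [inner_sub_left]
      _ ≤ ‖l' (x + t • d) - l' x‖ * ‖d‖ - L * t * ‖d‖ ^ 2 := by
        gcongr; exact real_inner_le_norm _ _
      _ ≤ L * t * ‖d‖ * ‖d‖ - L * t * ‖d‖ ^ 2 := by gcongr
      _ = 0 := by ring
  have hanti := antitoneOn_of_hasDerivWithinAt_nonpos (convex_Icc 0 1)
    (fun t _ ↦ (hφ' t).continuousAt.continuousWithinAt)
    (fun t _ ↦ (hφ' t).hasDerivWithinAt) hslope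
  have hφ : φ 1 ≤ φ 0 :=
    hanti (Set.left_mem_Icc.2 zero_le_one) (Set.right_mem_Icc.2 zero_le_one) zero_le_one
  simp only [φ, d, one_smul, zero_smul, add_zero, add_sub_cancel] at hφ
  linarith

theorem le_forward_step_model_of_hasGradientAt_of_lipschitz
    (hgrad : ∀ x, HasGradientAt l (l' x) x) (hlip : ∀ x y, ‖l' x - l' y‖ ≤ L * ‖x - y‖)
    {γ : ℝ} (hγ : γ ≠ 0) (u w : E) :
    l w ≤ l u - γ / 2 * ‖l' u‖ ^ 2 + 1 / (2 * γ) * ‖w - (u - γ • l' u)‖ ^ 2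
      - (1 - γ * L) / (2 * γ) * ‖u - w‖ ^ 2 := by
  have hdesc := le_add_inner_add_sq_of_hasGradientAt_of_lipschitz hgrad hlip u w
  have hsq : ‖w - (u - γ • l' u)‖ ^ 2 = ‖w - u‖ ^ 2 + 2 * γ * ⟪l' u, w - u⟫ + γ ^ 2 * ‖l' u‖ ^ 2 := by
    rw [show w - (u - γ • l' u) = (w - u) + γ • l' u by abel, norm_add_sq_real,
      real_inner_smul_right, norm_smul, mul_pow, Real.norm_eq_abs, sq_abs, real_inner_comm]
    ring
  have hcompleted : l u - γ / 2 * ‖l' u‖ ^ 2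
      + 1 / (2 * γ) * (‖w - u‖ ^ 2 + 2 * γ * ⟪l' u, w - u⟫ + γ ^ 2 * ‖l' u‖ ^ 2)
      - (1 - γ * L) / (2 * γ) * ‖w - u‖ ^ 2 = l u + ⟪l' u, w - u⟫ + L / 2 * ‖w - u‖ ^ 2 := by
    field_simp
    ring
  rwa [hsq, norm_sub_rev u w, hcompleted]

end DescentLemma

theorem moreauEnv_eq_of_mem_proxSet {E : Type*} [NormedAddCommGroup E] [InnerProductSpace ℝ E]
    {g : E → EReal} {γ : ℝ} {v w : E} (hw : w ∈ proxSet g γ v) :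
    moreauEnv g γ v = g w + (((1 / (2 * γ)) * ‖w - v‖ ^ 2 : ℝ) : EReal) :=
  le_antisymm (iInf_le _ w) (le_iInf hw)

theorem cost_of_fb_step_le_fbe_general
    {E : Type*} [NormedAddCommGroup E] [InnerProductSpace ℝ E] [FiniteDimensional ℝ E]
    (l : E → ℝ) (l' : E → E) (g : E → EReal) (L γ : ℝ)
    (hγ : 0 < γ)
    (hgrad : ∀ x : E, HasGradientAt l (l' x) x)
    (hlip : ∀ x y : E, ‖l' x - l' y‖ ≤ L * ‖x - y‖)
    (u ub : E) (hub : ub ∈ proxSet g γ (u - γ • l' u)) :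
    (l ub : EReal) + g ub ≤
      fbe l l' g γ u - ((((1 - γ * L) / (2 * γ)) * ‖u - ub‖ ^ 2 : ℝ) : EReal) := by
  have hmodel := le_forward_step_model_of_hasGradientAt_of_lipschitz hgrad hlip hγ.ne' u ub
  rw [fbe, moreauEnv_eq_of_mem_proxSet hub]
  calc (l ub : EReal) + g ub
      ≤ ((l u - γ / 2 * ‖l' u‖ ^ 2 + 1 / (2 * γ) * ‖ub - (u - γ • l' u)‖ ^ 2
          - (1 - γ * L) / (2 * γ) * ‖u - ub‖ ^ 2 : ℝ) : EReal) + g ub :=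
        add_le_add_left (EReal.coe_le_coe_iff.2 hmodel) _
    _ = _ := by
        simp only [EReal.coe_add, EReal.coe_neg, sub_eq_add_neg]
        ac_rfl

/-- `φ(ū) ≤ φ_γ(u) − ((1 − γL)/(2γ))‖u − ū‖²` for every
`ū ∈ T_γ(u)`. -/
theorem cost_of_fb_step_le_fbe
    {E : Type*} [NormedAddCommGroup E] [InnerProductSpace ℝ E] [FiniteDimensional ℝ E]
    (l : E → ℝ) (l' : E → E) (g : E → EReal) (L γ : ℝ)
    (hL : 0 < L) (hγ : 0 < γ)
    (hgrad : ∀ x : E, HasGradientAt l (l' x) x)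
    (hlip : ∀ x y : E, ‖l' x - l' y‖ ≤ L * ‖x - y‖)
    (hproper : ∃ x : E, g x ≠ ⊤) (hbot : ∀ x : E, g x ≠ ⊥)
    (hlsc : LowerSemicontinuous g)
    (hbdd : ∃ m : ℝ, ∀ x : E, (m : EReal) ≤ g x)
    (u ub : E) (hub : ub ∈ proxSet g γ (u - γ • l' u)) :
    (l ub : EReal) + g ub ≤
      fbe l l' g γ u - ((((1 - γ * L) / (2 * γ)) * ‖u - ub‖ ^ 2 : ℝ) : EReal) :=
  cost_of_fb_step_le_fbe_general l l' g L γ hγ hgrad hlip u ub hub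
end

section
/- For every γ with 0 < γ < 1/L, inf_{u ∈ E} φ(u) = inf_{u ∈ E} φ_γ(u) (Proposition 1(iv), infimum part). -/
/-!
Expanding the square in the Moreau envelope writes
`φ_γ(u) = inf_w (ℓ(u) + ⟪∇ℓ(u), w - u⟫ + ‖w - u‖² / (2γ) + g(w))`.
Taking `w = u` gives `φ_γ ≤ φ`. Conversely, since `L ≤ 1/γ`, the descent lemma
`ℓ(w) ≤ ℓ(u) + ⟪∇ℓ(u), w - u⟫ + (L/2)‖w - u‖²` shows that every term of the infimum
dominates `φ(w)`, so `inf φ ≤ φ_γ(u)`.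
-/

open scoped RealInnerProductSpace
open Filter Topology Asymptotics

namespace EReal

lemma coe_add_iInf {ι : Sort*} (c : ℝ) (f : ι → EReal) :
    (c : EReal) + ⨅ i, f i = ⨅ i, ((c : EReal) + f i) :=
  Monotone.map_iInf_of_continuousAt
    ((continuousAt_add (Or.inl (coe_ne_top c)) (Or.inl (coe_ne_bot c))).comp
      (continuousAt_const.prodMk continuousAt_id))
    (fun _ _ h => add_le_add_right h _) (coe_add_top c)

end EReal

section Descent

variable {E : Type*} [NormedAddCommGroup E] [InnerProductSpace ℝ E] [CompleteSpace E]

theorem HasGradientAt.hasDerivAt_comp_add_smul {l : E → ℝ} {g u d : E} {t : ℝ}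
    (h : HasGradientAt l g (u + t • d)) :
    HasDerivAt (fun s : ℝ => l (u + s • d)) ⟪g, d⟫ t := by
  have hline : HasDerivAt (fun s : ℝ => u + s • d) d t := by
    simpa using ((hasDerivAt_id t).smul_const d).const_add u
  have := (hasGradientAt_iff_hasFDerivAt.mp h).comp_hasDerivAt t hline
  simp only [InnerProductSpace.toDual_apply_apply] at this
  exact this

theorem le_add_inner_add_sq_of_lipschitz_gradient {l : E → ℝ} {l' : E → E} {L : ℝ}
    (hgrad : ∀ x : E, HasGradientAt l (l' x) x)
    (hlip : ∀ x y : E, ‖l' x - l' y‖ ≤ L * ‖x - y‖) (u w : E) :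
    l w ≤ l u + ⟪l' u, w - u⟫ + L / 2 * ‖w - u‖ ^ 2 := by
  set d := w - u
  let h : ℝ → ℝ := fun t => l (u + t • d) - t * ⟪l' u, d⟫ - L / 2 * t ^ 2 * ‖d‖ ^ 2
  have hderiv : ∀ t : ℝ, HasDerivAt h
      (⟪l' (u + t • d), d⟫ - ⟪l' u, d⟫ - L / 2 * (2 * t) * ‖d‖ ^ 2) t := fun t =>
    (((hgrad _).hasDerivAt_comp_add_smul.sub ((hasDerivAt_id t).mul_const _)).sub
      (((hasDerivAt_pow 2 t).const_mul _).mul_const _)).congr_deriv (by simp)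
  have hslope : ∀ t : ℝ, 0 < t → ⟪l' (u + t • d) - l' u, d⟫ ≤ L * t * ‖d‖ ^ 2 := fun t ht =>
    calc ⟪l' (u + t • d) - l' u, d⟫ ≤ ‖l' (u + t • d) - l' u‖ * ‖d‖ := real_inner_le_norm _ _
      _ ≤ L * ‖(u + t • d) - u‖ * ‖d‖ := by gcongr; exact hlip _ _
      _ = L * t * ‖d‖ ^ 2 := by
        rw [add_sub_cancel_left, norm_smul, Real.norm_of_nonneg ht.le]; ring
  have hmono : AntitoneOn h (Set.Icc 0 1) := by
    refine antitoneOn_of_deriv_nonpos (convex_Icc 0 1)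
      (fun t _ => (hderiv t).continuousAt.continuousWithinAt)
      (fun t _ => (hderiv t).differentiableAt.differentiableWithinAt) fun t ht => ?_
    rw [interior_Icc] at ht
    have := hslope t ht.1
    rw [inner_sub_left] at this
    rw [(hderiv t).deriv]
    linarith
  have h01 := hmono (by simp) (by simp) zero_le_one
  simp only [h, one_smul, zero_smul, add_zero, zero_mul, mul_zero, sub_zero, one_pow, mul_one,
    one_mul, ne_eq, OfNat.ofNat_ne_zero, not_false_eq_true, zero_pow, add_sub_cancel, d] at h01
  linarith

end Descent

section FBE

variable {E : Type*} [NormedAddCommGroup E] [InnerProductSpace ℝ E]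

theorem fbe_eq_iInf (l : E → ℝ) (l' : E → E) (g : E → EReal) {γ : ℝ} (hγ : 0 < γ) (u : E) :
    fbe l l' g γ u = ⨅ w : E,
      (((l u + ⟪l' u, w - u⟫ + (1 / (2 * γ)) * ‖w - u‖ ^ 2 : ℝ) : EReal) + g w) := by
  rw [fbe, moreauEnv, EReal.coe_add_iInf]
  congr 1 with w
  rw [add_comm (g w), ← add_assoc, ← EReal.coe_add]
  congr 2
  rw [show w - (u - γ • l' u) = (w - u) + γ • l' u by abel, norm_add_sq_real,
    real_inner_smul_right, norm_smul, Real.norm_of_nonneg hγ.le, real_inner_comm]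
  field_simp
  ring

theorem fbe_le_cost (l : E → ℝ) (l' : E → E) (g : E → EReal) {γ : ℝ} (hγ : 0 < γ) (u : E) :
    fbe l l' g γ u ≤ (l u : EReal) + g u := by
  rw [fbe_eq_iInf l l' g hγ]
  exact iInf_le_of_le u (by simp)

theorem iInf_cost_le_fbe [CompleteSpace E] {l : E → ℝ} {l' : E → E} (g : E → EReal) {L γ : ℝ}
    (hγ : 0 < γ) (hLγ : L * γ ≤ 1) (hgrad : ∀ x : E, HasGradientAt l (l' x) x)
    (hlip : ∀ x y : E, ‖l' x - l' y‖ ≤ L * ‖x - y‖) (u : E) :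
    ⨅ w : E, ((l w : EReal) + g w) ≤ fbe l l' g γ u := by
  rw [fbe_eq_iInf l l' g hγ]
  refine le_iInf fun w => iInf_le_of_le w (add_le_add_left (EReal.coe_le_coe_iff.mpr ?_) _)
  have hcoef : L / 2 ≤ 1 / (2 * γ) := by
    rw [div_le_div_iff₀ two_pos (by positivity)]
    linarith
  calc l w ≤ l u + ⟪l' u, w - u⟫ + L / 2 * ‖w - u‖ ^ 2 :=
        le_add_inner_add_sq_of_lipschitz_gradient hgrad hlip u w
    _ ≤ l u + ⟪l' u, w - u⟫ + 1 / (2 * γ) * ‖w - u‖ ^ 2 := by gcongr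

end FBE

theorem iInf_cost_eq_iInf_fbe_general
    {E : Type*} [NormedAddCommGroup E] [InnerProductSpace ℝ E] [FiniteDimensional ℝ E]
    (l : E → ℝ) (l' : E → E) (g : E → EReal) (L γ : ℝ)
    (hL : 0 < L) (hγ : 0 < γ)
    (hgrad : ∀ x : E, HasGradientAt l (l' x) x)
    (hlip : ∀ x y : E, ‖l' x - l' y‖ ≤ L * ‖x - y‖)
    (hγL : γ < 1 / L) :
    (⨅ u : E, ((l u : EReal) + g u)) = ⨅ u : E, fbe l l' g γ u := by
  have hLγ : L * γ ≤ 1 := by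
    rw [lt_div_iff₀ hL] at hγL
    linarith
  exact le_antisymm (le_iInf (iInf_cost_le_fbe g hγ hLγ hgrad hlip))
    (iInf_mono (fbe_le_cost l l' g hγ))

/-- for `0 < γ < 1/L`, `inf φ = inf φ_γ`. -/
theorem iInf_cost_eq_iInf_fbe
    {E : Type*} [NormedAddCommGroup E] [InnerProductSpace ℝ E] [FiniteDimensional ℝ E]
    (l : E → ℝ) (l' : E → E) (g : E → EReal) (L γ : ℝ)
    (hL : 0 < L) (hγ : 0 < γ)
    (hgrad : ∀ x : E, HasGradientAt l (l' x) x)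
    (hlip : ∀ x y : E, ‖l' x - l' y‖ ≤ L * ‖x - y‖)
    (hproper : ∃ x : E, g x ≠ ⊤) (hbot : ∀ x : E, g x ≠ ⊥)
    (hlsc : LowerSemicontinuous g)
    (hbdd : ∃ m : ℝ, ∀ x : E, (m : EReal) ≤ g x)
    (hγL : γ < 1 / L) :
    (⨅ u : E, ((l u : EReal) + g u)) = ⨅ u : E, fbe l l' g γ u :=
  iInf_cost_eq_iInf_fbe_general l l' g L γ hL hγ hgrad hlip hγL
end

section
/- For every γ > 0, the forward–backward envelope φ_γ : E → ℝ is real-valued and locally Lipschitz continuous (strictly continuous) on all of E. -/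
open scoped RealInnerProductSpace
open Filter Topology Asymptotics

/-!
The smooth part `ℓ - (γ/2)‖∇ℓ‖²` is locally Lipschitz because `ℓ` is `C¹` with Lipschitz
gradient, and so is the forward step `u ↦ u - γ∇ℓ(u)`. For `g` proper and bounded below the
Moreau envelope is finite, and
`g^γ(v) - ‖v‖²/(2γ) = inf_w (g(w) + ‖w‖²/(2γ) - ⟪w, v⟫/γ)`
is an infimum of affine functions of `v`, hence concave. A finite concave function on a
finite-dimensional space is locally Lipschitz, so `g^γ` is too.
-/

section MoreauEnvelope

variable {E : Type*} [NormedAddCommGroup E] [InnerProductSpace ℝ E] {g : E → EReal} {γ : ℝ}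

lemma moreauEnv_le (w v : E) :
    moreauEnv g γ v ≤ g w + ((1 / (2 * γ) * ‖w - v‖ ^ 2 : ℝ) : EReal) :=
  iInf_le _ w

lemma coe_le_moreauEnv {m : ℝ} (hγ : 0 ≤ γ) (hm : ∀ x, (m : EReal) ≤ g x) (v : E) :
    (m : EReal) ≤ moreauEnv g γ v := by
  refine le_iInf fun w => ?_
  rw [← add_zero (m : EReal)]
  gcongr
  · exact hm w
  · exact EReal.coe_nonneg.2 (by positivity)

lemma moreauEnv_ne_top {x₀ : E} (hx₀ : g x₀ ≠ ⊤) (v : E) : moreauEnv g γ v ≠ ⊤ :=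
  ne_top_of_le_ne_top (EReal.add_lt_top hx₀ (EReal.coe_ne_top _)).ne (moreauEnv_le x₀ v)

lemma coe_toReal_moreauEnv (hγ : 0 ≤ γ) (hproper : ∃ x, g x ≠ ⊤)
    (hbdd : ∃ m : ℝ, ∀ x, (m : EReal) ≤ g x) (v : E) :
    ((moreauEnv g γ v).toReal : EReal) = moreauEnv g γ v := by
  obtain ⟨x₀, hx₀⟩ := hproper
  obtain ⟨m, hm⟩ := hbdd
  exact EReal.coe_toReal (moreauEnv_ne_top hx₀ v)
    (ne_bot_of_le_ne_bot (EReal.coe_ne_bot m) (coe_le_moreauEnv hγ hm v))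

lemma toReal_moreauEnv_le (hγ : 0 ≤ γ) (hproper : ∃ x, g x ≠ ⊤)
    (hbdd : ∃ m : ℝ, ∀ x, (m : EReal) ≤ g x) {w : E} {r : ℝ} (hr : g w = r) (v : E) :
    (moreauEnv g γ v).toReal ≤ r + 1 / (2 * γ) * ‖w - v‖ ^ 2 := by
  have h := moreauEnv_le (g := g) (γ := γ) w v
  rwa [hr, ← coe_toReal_moreauEnv hγ hproper hbdd, ← EReal.coe_add, EReal.coe_le_coe_iff] at h

lemma norm_sub_sq_sub_norm_sq_convexCombo (w x y : E) {a b : ℝ} (hab : a + b = 1) :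
    a * (‖w - x‖ ^ 2 - ‖x‖ ^ 2) + b * (‖w - y‖ ^ 2 - ‖y‖ ^ 2)
      = ‖w - (a • x + b • y)‖ ^ 2 - ‖a • x + b • y‖ ^ 2 := by
  obtain rfl : b = 1 - a := by linarith
  simp only [norm_sub_sq_real, inner_add_right, inner_smul_right]
  ring

lemma concaveOn_toReal_moreauEnv_sub_sq (hγ : 0 ≤ γ) (hproper : ∃ x, g x ≠ ⊤)
    (hbdd : ∃ m : ℝ, ∀ x, (m : EReal) ≤ g x) :
    ConcaveOn ℝ Set.univ fun v : E => (moreauEnv g γ v).toReal - 1 / (2 * γ) * ‖v‖ ^ 2 := by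
  refine ⟨convex_univ, fun x _ y _ a b ha hb hab => ?_⟩
  simp only [smul_eq_mul]
  suffices h : ((a * ((moreauEnv g γ x).toReal - 1 / (2 * γ) * ‖x‖ ^ 2)
      + b * ((moreauEnv g γ y).toReal - 1 / (2 * γ) * ‖y‖ ^ 2)
      + 1 / (2 * γ) * ‖a • x + b • y‖ ^ 2 : ℝ) : EReal) ≤ moreauEnv g γ (a • x + b • y) by
    rw [← coe_toReal_moreauEnv hγ hproper hbdd (a • x + b • y), EReal.coe_le_coe_iff] at h
    linarith
  refine le_iInf fun w => ?_
  obtain ⟨m, hm⟩ := hbdd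
  rcases eq_or_ne (g w) ⊤ with htop | hfin
  · rw [htop, EReal.top_add_of_ne_bot (EReal.coe_ne_bot _)]
    exact le_top
  obtain ⟨r, hr⟩ : ∃ r : ℝ, g w = r :=
    ⟨_, (EReal.coe_toReal hfin (ne_bot_of_le_ne_bot (EReal.coe_ne_bot m) (hm w))).symm⟩
  have hx := toReal_moreauEnv_le hγ hproper ⟨m, hm⟩ hr x
  have hy := toReal_moreauEnv_le hγ hproper ⟨m, hm⟩ hr y
  rw [hr, ← EReal.coe_add, EReal.coe_le_coe_iff]
  linear_combination a * hx + b * hy + r * hab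
    + 1 / (2 * γ) * norm_sub_sq_sub_norm_sq_convexCombo w x y hab

lemma locallyLipschitz_toReal_moreauEnv [FiniteDimensional ℝ E] (hγ : 0 ≤ γ)
    (hproper : ∃ x, g x ≠ ⊤) (hbdd : ∃ m : ℝ, ∀ x, (m : EReal) ≤ g x) :
    LocallyLipschitz fun v : E => (moreauEnv g γ v).toReal := by
  have hsq : LocallyLipschitz fun v : E => 1 / (2 * γ) * ‖v‖ ^ 2 :=
    (contDiff_const.mul (contDiff_norm_sq ℝ)).locallyLipschitz
  simpa using (concaveOn_toReal_moreauEnv_sub_sq hγ hproper hbdd).locallyLipschitz.add hsq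

end MoreauEnvelope

lemma contDiff_one_of_hasGradientAt {E : Type*} [NormedAddCommGroup E] [InnerProductSpace ℝ E]
    [CompleteSpace E] {f : E → ℝ} {f' : E → E} (hf : ∀ x, HasGradientAt f (f' x) x)
    (hf' : Continuous f') : ContDiff ℝ 1 f :=
  contDiff_one_iff_hasFDerivAt.2
    ⟨_, (InnerProductSpace.toDual ℝ E).continuous.comp hf', fun x => (hf x).hasFDerivAt⟩

theorem fbe_realValued_locallyLipschitz_general
    {E : Type*} [NormedAddCommGroup E] [InnerProductSpace ℝ E] [FiniteDimensional ℝ E]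
    (l : E → ℝ) (l' : E → E) (g : E → EReal) (L γ : ℝ)
    (hγ : 0 < γ)
    (hgrad : ∀ x : E, HasGradientAt l (l' x) x)
    (hlip : ∀ x y : E, ‖l' x - l' y‖ ≤ L * ‖x - y‖)
    (hproper : ∃ x : E, g x ≠ ⊤)
    (hbdd : ∃ m : ℝ, ∀ x : E, (m : EReal) ≤ g x) :
    ∃ f : E → ℝ, (∀ u : E, fbe l l' g γ u = (f u : EReal)) ∧ LocallyLipschitz f := by
  have hl' : LipschitzWith L.toNNReal l' :=
    .of_dist_le' fun x y => by simpa only [dist_eq_norm] using hlip x y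
  refine ⟨fun u => (l u - γ / 2 * ‖l' u‖ ^ 2) + (moreauEnv g γ (u - γ • l' u)).toReal,
    fun u => by rw [fbe, EReal.coe_add, coe_toReal_moreauEnv hγ.le hproper hbdd], ?_⟩
  have hl : LocallyLipschitz l :=
    (contDiff_one_of_hasGradientAt hgrad hl'.continuous).locallyLipschitz
  have hsq : LocallyLipschitz fun u => γ / 2 * ‖l' u‖ ^ 2 :=
    (contDiff_const.mul (contDiff_norm_sq ℝ)).locallyLipschitz.comp hl'.locallyLipschitz
  have hstep : LocallyLipschitz fun u => u - γ • l' u :=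
    LocallyLipschitz.id.sub ((lipschitzWith_smul γ).comp hl').locallyLipschitz
  exact (hl.sub hsq).add ((locallyLipschitz_toReal_moreauEnv hγ.le hproper hbdd).comp hstep)

/-- the FBE is real-valued and locally Lipschitz (strictly
continuous) on all of `E`. -/
theorem fbe_realValued_locallyLipschitz
    {E : Type*} [NormedAddCommGroup E] [InnerProductSpace ℝ E] [FiniteDimensional ℝ E]
    (l : E → ℝ) (l' : E → E) (g : E → EReal) (L γ : ℝ)
    (hL : 0 < L) (hγ : 0 < γ)
    (hgrad : ∀ x : E, HasGradientAt l (l' x) x)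
    (hlip : ∀ x y : E, ‖l' x - l' y‖ ≤ L * ‖x - y‖)
    (hproper : ∃ x : E, g x ≠ ⊤) (hbot : ∀ x : E, g x ≠ ⊥)
    (hlsc : LowerSemicontinuous g)
    (hbdd : ∃ m : ℝ, ∀ x : E, (m : EReal) ≤ g x) :
    ∃ f : E → ℝ, (∀ u : E, fbe l l' g γ u = (f u : EReal)) ∧ LocallyLipschitz f :=
  fbe_realValued_locallyLipschitz_general l l' g L γ hγ hgrad hlip hproper hbdd
end

section
/- Residual vanishing at Newton-type trial points: let R : E → E with R(u⋆) = 0, and suppose R is strictly differentiable at u⋆ with derivative J (HasStrictFDerivAt). Let (u^k) and (d^k) be sequences with u^k → u⋆, d^k → 0, d^k ≠ 0 for all k, and satisfying the Dennis–Moré condition ‖R(u^k) + J d^k‖ / ‖d^k‖ → 0. Then ‖R(u^k + d^k)‖ / ‖d^k‖ → 0. -/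
open Filter Topology Asymptotics

/-- Strict differentiability controls `f (u + d) - f u` by `f' d` even when the base point `u`
moves towards `x` together with the shrinking step `d`. -/
theorem HasStrictFDerivAt.tendsto_norm_sub_sub_div_norm {𝕜 E F α : Type*}
    [NontriviallyNormedField 𝕜] [NormedAddCommGroup E] [NormedSpace 𝕜 E]
    [NormedAddCommGroup F] [NormedSpace 𝕜 F] {f : E → F} {f' : E →L[𝕜] F} {x : E}
    (hf : HasStrictFDerivAt f f' x) {l : Filter α} {u d : α → E}
    (hu : Tendsto u l (𝓝 x)) (hd : Tendsto d l (𝓝 0)) :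
    Tendsto (fun k => ‖f (u k + d k) - f (u k) - f' (d k)‖ / ‖d k‖) l (𝓝 0) := by
  have hud : Tendsto (fun k => u k + d k) l (𝓝 x) := by simpa using hu.add hd
  have ho := hf.isLittleO.comp_tendsto (hud.prodMk_nhds hu)
  simp only [Function.comp_def, add_sub_cancel_left] at ho
  exact ho.norm_norm.tendsto_div_nhds_zero

theorem norm_div_le_norm_sub_div_add_norm_div {F : Type*} [SeminormedAddCommGroup F]
    (a b : F) (r : ℝ) (hr : 0 ≤ r) : ‖a‖ / r ≤ ‖a - b‖ / r + ‖b‖ / r := by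
  rw [← add_div]
  exact div_le_div_of_nonneg_right (norm_le_norm_sub_add a b) hr

theorem residual_vanishing_dennis_more_general
    {E : Type*} [NormedAddCommGroup E] [InnerProductSpace ℝ E]
    (R : E → E) (ustar : E) (J : E →L[ℝ] E)
    (hJ : HasStrictFDerivAt R J ustar)
    (u d : ℕ → E)
    (hu : Tendsto u atTop (𝓝 ustar)) (hd : Tendsto d atTop (𝓝 0))
    (hdm : Tendsto (fun k => ‖R (u k) + J (d k)‖ / ‖d k‖) atTop (𝓝 0)) :
    Tendsto (fun k => ‖R (u k + d k)‖ / ‖d k‖) atTop (𝓝 0) := by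
  have hrem := hJ.tendsto_norm_sub_sub_div_norm hu hd
  simp only [sub_sub] at hrem
  refine squeeze_zero (fun k => by positivity) (fun k => ?_) (by simpa using hrem.add hdm)
  exact norm_div_le_norm_sub_div_add_norm_div _ _ _ (norm_nonneg _)

/-- residual vanishing at Newton-type trial points under the
Dennis–Moré condition. -/
theorem residual_vanishing_dennis_more
    {E : Type*} [NormedAddCommGroup E] [InnerProductSpace ℝ E] [FiniteDimensional ℝ E]
    (R : E → E) (ustar : E) (J : E →L[ℝ] E)
    (hzero : R ustar = 0) (hJ : HasStrictFDerivAt R J ustar)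
    (u d : ℕ → E)
    (hu : Tendsto u atTop (𝓝 ustar)) (hd : Tendsto d atTop (𝓝 0))
    (hd0 : ∀ k, d k ≠ 0)
    (hdm : Tendsto (fun k => ‖R (u k) + J (d k)‖ / ‖d k‖) atTop (𝓝 0)) :
    Tendsto (fun k => ‖R (u k + d k)‖ / ‖d k‖) atTop (𝓝 0) :=
  residual_vanishing_dennis_more_general R ustar J hJ u d hu hd hdm
end

section
/- Superlinear accuracy of Dennis–Moré steps: let R : E → E with R(u⋆) = 0, suppose R is strictly differentiable at u⋆ with derivative J (HasStrictFDerivAt), and suppose J is invertible. Let (u^k) and (d^k) be sequences with u^k → u⋆, u^k ≠ u⋆ for all k, d^k → 0, d^k ≠ 0 for all k, and satisfying the Dennis–Moré condition ‖R(u^k) + J d^k‖ / ‖d^k‖ → 0. Then ‖u^k + d^k − u⋆‖ / ‖u^k − u⋆‖ → 0. -/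
/-!
Write `e = u - u⋆` and `s = u + d - u⋆ = e + d`. Linearising `R` at `u⋆` gives
`J s = (R u + J d) - (R u - J e) = o(‖d‖) + o(‖e‖)`, and inverting `J` gives `s = o(‖d‖ + ‖e‖)`.
Since `d = s - e`, this is `s = o(‖s‖ + ‖e‖)`; absorbing the `‖s‖` on the right yields `s = o(e)`.
-/

open Filter Topology Asymptotics

theorem Asymptotics.isLittleO_of_isLittleO_norm_add_norm {α E F : Type*} [NormedAddCommGroup E]
    [NormedAddCommGroup F] {l : Filter α} {f : α → E} {g : α → F}
    (h : f =o[l] fun x => ‖f x‖ + ‖g x‖) : f =o[l] g := by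
  have hsum : (fun x => ‖f x‖ + ‖g x‖) =O[l] fun x => ‖g x‖ :=
    h.norm_left.right_isBigO_sub.congr_right fun x => add_sub_cancel_left _ _
  exact h.trans_isBigO hsum.of_norm_right

theorem HasFDerivAt.isLittleO_add_sub_of_dennisMore {𝕜 E F α : Type*}
    [NontriviallyNormedField 𝕜] [NormedAddCommGroup E] [NormedSpace 𝕜 E]
    [NormedAddCommGroup F] [NormedSpace 𝕜 F] {R : E → F} {J : E ≃L[𝕜] F} {ustar : E}
    (hJ : HasFDerivAt R (J : E →L[𝕜] F) ustar) (hzero : R ustar = 0)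
    {l : Filter α} {u d : α → E} (hu : Tendsto u l (𝓝 ustar))
    (hdm : (fun x => R (u x) + (J : E →L[𝕜] F) (d x)) =o[l] d) :
    (fun x => u x + d x - ustar) =o[l] fun x => u x - ustar := by
  have hlin : (fun x => R (u x) - J (u x - ustar)) =o[l] fun x => u x - ustar := by
    simpa [hzero, Function.comp_def] using hJ.isLittleO.comp_tendsto hu
  have hJstep : (fun x => J (u x + d x - ustar)) =o[l] fun x => ‖d x‖ + ‖u x - ustar‖ :=
    (hdm.add_add hlin.neg_left).congr_left fun x => by
      rw [add_sub_right_comm, map_add]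
      simp only [ContinuousLinearEquiv.coe_coe]
      abel
  have hstep : (fun x => u x + d x - ustar) =o[l] fun x => ‖d x‖ + ‖u x - ustar‖ :=
    (J.isBigO_comp_rev _ _).trans_isLittleO hJstep
  refine isLittleO_of_isLittleO_norm_add_norm (hstep.trans_isBigO (IsBigO.of_bound 2
    (Eventually.of_forall fun x => ?_)))
  have hd : ‖d x‖ ≤ ‖u x + d x - ustar‖ + ‖u x - ustar‖ := by
    simpa using norm_sub_le (u x + d x - ustar) (u x - ustar)
  rw [Real.norm_of_nonneg (by positivity), Real.norm_of_nonneg (by positivity)]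
  linarith [norm_nonneg (u x + d x - ustar)]

theorem dennis_more_superlinear_accuracy_general
    {E : Type*} [NormedAddCommGroup E] [InnerProductSpace ℝ E]
    (R : E → E) (ustar : E) (J : E ≃L[ℝ] E)
    (hzero : R ustar = 0) (hJ : HasStrictFDerivAt R (J : E →L[ℝ] E) ustar)
    (u d : ℕ → E)
    (hu : Tendsto u atTop (𝓝 ustar))
    (hd0 : ∀ k, d k ≠ 0)
    (hdm : Tendsto (fun k => ‖R (u k) + (J : E →L[ℝ] E) (d k)‖ / ‖d k‖) atTop (𝓝 0)) :
    Tendsto (fun k => ‖u k + d k - ustar‖ / ‖u k - ustar‖) atTop (𝓝 0) := by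
  have hdm' : (fun k => R (u k) + (J : E →L[ℝ] E) (d k)) =o[atTop] d := by
    rw [← isLittleO_norm_norm]
    exact (isLittleO_iff_tendsto fun k hk => absurd (norm_eq_zero.1 hk) (hd0 k)).2 hdm
  exact (hJ.hasFDerivAt.isLittleO_add_sub_of_dennisMore hzero hu hdm').norm_norm
    |>.tendsto_div_nhds_zero

/-- superlinear accuracy of Dennis–Moré steps: the trial points
`u^k + d^k` approach `u⋆` superlinearly relative to `u^k`. -/
theorem dennis_more_superlinear_accuracy
    {E : Type*} [NormedAddCommGroup E] [InnerProductSpace ℝ E] [FiniteDimensional ℝ E]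
    (R : E → E) (ustar : E) (J : E ≃L[ℝ] E)
    (hzero : R ustar = 0) (hJ : HasStrictFDerivAt R (J : E →L[ℝ] E) ustar)
    (u d : ℕ → E)
    (hu : Tendsto u atTop (𝓝 ustar)) (hu0 : ∀ k, u k ≠ ustar)
    (hd : Tendsto d atTop (𝓝 0)) (hd0 : ∀ k, d k ≠ 0)
    (hdm : Tendsto (fun k => ‖R (u k) + (J : E →L[ℝ] E) (d k)‖ / ‖d k‖) atTop (𝓝 0)) :
    Tendsto (fun k => ‖u k + d k - ustar‖ / ‖u k - ustar‖) atTop (𝓝 0) :=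
  dennis_more_superlinear_accuracy_general R ustar J hzero hJ u d hu hd0 hdm
end

section
/- Eventual acceptance of unit stepsize: let 0 < γ < 1/L and 0 < σ < γ(1 − γL)/2. Let u⋆ ∈ E and let (u^k), (v^k) be sequences in E and (r^k) a sequence in E such that for all k: φ_γ(u^k) > φ_γ(u⋆) and φ_γ(u^k) − φ_γ(u⋆) ≥ (γ(1 − γL)/2)‖r^k‖², and suppose ε_k := (φ_γ(v^k) − φ_γ(u⋆)) / (φ_γ(u^k) − φ_γ(u⋆)) → 0. Then there exists K such that for all k ≥ K, φ_γ(v^k) ≤ φ_γ(u^k) − σ‖r^k‖², i.e., the PANOC linesearch condition is satisfied by the full Newton-type trial point v^k. -/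
open scoped RealInnerProductSpace
open Filter Topology Asymptotics

/-!
With `a = φ_γ(uᵏ) − φ_γ(u⋆) > 0`, `b = φ_γ(vᵏ) − φ_γ(u⋆) = εₖ a` and `c = γ(1 − γL)/2`,
the linesearch condition `b ≤ a − σ‖rᵏ‖²` follows from `c‖rᵏ‖² ≤ a` as soon as
`εₖ ≤ 1 − σ/c`, and this threshold is positive because `σ < c`; since `εₖ → 0` it is
eventually met.
-/

lemma le_sub_mul_of_div_lt_one_sub {a b c s σ : ℝ} (hσ : 0 ≤ σ) (hc : 0 < c) (ha : 0 < a)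
    (hs : c * s ≤ a) (hb : b / a < 1 - σ / c) : b ≤ a - σ * s :=
  calc b ≤ (1 - σ / c) * a := ((div_lt_iff₀ ha).1 hb).le
    _ = a - σ / c * a := by ring
    _ ≤ a - σ / c * (c * s) := by gcongr
    _ = a - σ * s := by field_simp

lemma eventually_le_sub_mul_of_tendsto_div {a b s : ℕ → ℝ} {c σ : ℝ} (hσ : 0 ≤ σ)
    (hσc : σ < c) (ha : ∀ k, 0 < a k) (hs : ∀ k, c * s k ≤ a k)
    (hba : Tendsto (fun k => b k / a k) atTop (𝓝 0)) :
    ∀ᶠ k in atTop, b k ≤ a k - σ * s k := by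
  have hc : 0 < c := hσ.trans_lt hσc
  have hthreshold : 0 < 1 - σ / c := sub_pos.2 ((div_lt_one hc).2 hσc)
  filter_upwards [hba.eventually (eventually_lt_nhds hthreshold)] with k hk
  exact le_sub_mul_of_div_lt_one_sub hσ hc (ha k) (hs k) hk

theorem eventual_unit_stepsize_general
    {E : Type*} [NormedAddCommGroup E] [InnerProductSpace ℝ E]
    (l : E → ℝ) (l' : E → E) (g : E → EReal) (L γ : ℝ)
    (σ : ℝ) (hσ : 0 < σ) (hσ' : σ < γ * (1 - γ * L) / 2)
    (ustar : E) (u v : ℕ → E) (r : ℕ → E)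
    (hgt : ∀ k, (fbe l l' g γ ustar).toReal < (fbe l l' g γ (u k)).toReal)
    (hge : ∀ k, γ * (1 - γ * L) / 2 * ‖r k‖ ^ 2 ≤
        (fbe l l' g γ (u k)).toReal - (fbe l l' g γ ustar).toReal)
    (heps : Tendsto
      (fun k => ((fbe l l' g γ (v k)).toReal - (fbe l l' g γ ustar).toReal) /
        ((fbe l l' g γ (u k)).toReal - (fbe l l' g γ ustar).toReal))
      atTop (𝓝 0)) :
    ∃ K : ℕ, ∀ k ≥ K,
      (fbe l l' g γ (v k)).toReal ≤ (fbe l l' g γ (u k)).toReal - σ * ‖r k‖ ^ 2 := by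
  have hdecrease := eventually_le_sub_mul_of_tendsto_div hσ.le hσ'
    (fun k => sub_pos.2 (hgt k)) hge heps
  obtain ⟨K, hK⟩ := eventually_atTop.1 hdecrease
  exact ⟨K, fun k hk => by linarith [hK k hk]⟩

/-- eventual acceptance of the unit stepsize: the PANOC
linesearch condition is eventually satisfied by the full Newton-type trial
point. -/
theorem eventual_unit_stepsize
    {E : Type*} [NormedAddCommGroup E] [InnerProductSpace ℝ E] [FiniteDimensional ℝ E]
    (l : E → ℝ) (l' : E → E) (g : E → EReal) (L γ : ℝ)
    (hL : 0 < L) (hγ : 0 < γ)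
    (hgrad : ∀ x : E, HasGradientAt l (l' x) x)
    (hlip : ∀ x y : E, ‖l' x - l' y‖ ≤ L * ‖x - y‖)
    (hproper : ∃ x : E, g x ≠ ⊤) (hbot : ∀ x : E, g x ≠ ⊥)
    (hlsc : LowerSemicontinuous g)
    (hbdd : ∃ m : ℝ, ∀ x : E, (m : EReal) ≤ g x)
    (hγL : γ < 1 / L) (σ : ℝ) (hσ : 0 < σ) (hσ' : σ < γ * (1 - γ * L) / 2)
    (ustar : E) (u v : ℕ → E) (r : ℕ → E)
    (hgt : ∀ k, (fbe l l' g γ ustar).toReal < (fbe l l' g γ (u k)).toReal)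
    (hge : ∀ k, γ * (1 - γ * L) / 2 * ‖r k‖ ^ 2 ≤
        (fbe l l' g γ (u k)).toReal - (fbe l l' g γ ustar).toReal)
    (heps : Tendsto
      (fun k => ((fbe l l' g γ (v k)).toReal - (fbe l l' g γ ustar).toReal) /
        ((fbe l l' g γ (u k)).toReal - (fbe l l' g γ ustar).toReal))
      atTop (𝓝 0)) :
    ∃ K : ℕ, ∀ k ≥ K,
      (fbe l l' g γ (v k)).toReal ≤ (fbe l l' g γ (u k)).toReal - σ * ‖r k‖ ^ 2 :=
  eventual_unit_stepsize_general l l' g L γ σ hσ hσ' ustar u v r hgt hge heps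
end
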